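/- arXiv:1908.09103 — 2 statements merged into one kernel-verified Lean document; each statement's English description precedes it below -/
import Mathlib

section
/- Under the Setup, for any support point θ* ∈ S(p,Θ_I) the following are equivalent: (i) there exists c > 0 such that p·t ≤ −c‖t‖ for every t in the linearized cone L(θ*); (ii) the infimum, over all unit vectors t ∈ ℝ^d with p·t ≥ 0, of max{ max_{j∈J1*(θ*)} D_j(θ*)·t , max_{J1<j≤J} |D_j(θ*)·t| } is strictly positive. -/
/-!
Both conditions say that no unit vector `t` of the linearized cone has `p·t ≥ 0`, made uniform
by compactness. On the compact set of unit vectors with `p·t ≥ 0` the largest linearized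
violation of an active constraint is continuous and positive, hence bounded below by some
`ε > 0`; conversely, on the compact set of unit vectors of the cone `-p·t` is positive, hence
at least some `c > 0`, and positive homogeneity carries `p·t ≤ -c` from the sphere to `p·t ≤ -c‖t‖`
on the whole cone.
-/

open Filter Topology Metric RealInnerProductSpace

noncomputable section

/-- The abstract Setup (Assumption 1) of Kaido–Molinari–Stoye: a compact convex parameter
space `Θ ⊆ ℝ^d` with nonempty interior, `J` continuously differentiable constraint
functions `g j` (inequality constraints for `j < J1`, equality constraints for
`J1 ≤ j`), with (continuous) gradients `D j`, and a direction of projection `p ≠ 0`. -/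
structure PISetup (d J J1 : ℕ) where
  Θ : Set (EuclideanSpace ℝ (Fin d))
  g : Fin J → EuclideanSpace ℝ (Fin d) → ℝ
  D : Fin J → EuclideanSpace ℝ (Fin d) → EuclideanSpace ℝ (Fin d)
  p : EuclideanSpace ℝ (Fin d)
  hd : 1 ≤ d
  hJ : 1 ≤ J
  hJ1 : J1 ≤ J
  compactΘ : IsCompact Θ
  convexΘ : Convex ℝ Θ
  intΘ_nonempty : (interior Θ).Nonempty
  hgrad : ∀ (j : Fin J) (θ : EuclideanSpace ℝ (Fin d)), HasGradientAt (g j) (D j θ) θ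
  hgradCont : ∀ j : Fin J, Continuous (D j)
  hp : p ≠ 0

namespace PISetup

variable {d J J1 : ℕ}

/-- The identified set `Θ_I`. -/
def idSet (S : PISetup d J J1) : Set (EuclideanSpace ℝ (Fin d)) :=
  {θ ∈ S.Θ | ∀ j : Fin J, ((j : ℕ) < J1 → S.g j θ ≤ 0) ∧ (J1 ≤ (j : ℕ) → S.g j θ = 0)}

/-- The support set `S(p, Θ_I)`: the maximizers of `θ ↦ ⟪p, θ⟫` over `Θ_I`. -/
def suppSet (S : PISetup d J J1) : Set (EuclideanSpace ℝ (Fin d)) :=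
  {θ ∈ S.idSet | ∀ θ' ∈ S.idSet, ⟪S.p, θ'⟫ ≤ ⟪S.p, θ⟫}

/-- The criterion `Q(θ) = max{0, max_{j< J1} g_j(θ), max_{J1 ≤ j} |g_j(θ)|}`. -/
def crit (S : PISetup d J J1) (θ : EuclideanSpace ℝ (Fin d)) : ℝ :=
  max 0 (⨆ j : Fin J, if (j : ℕ) < J1 then S.g j θ else |S.g j θ|)

/-- The ball `B(θ*, η) = {θ ∈ Θ : ‖θ - θ*‖ ≤ η}`. -/
def ball (S : PISetup d J J1) (θs : EuclideanSpace ℝ (Fin d)) (η : ℝ) :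
    Set (EuclideanSpace ℝ (Fin d)) :=
  {θ ∈ S.Θ | ‖θ - θs‖ ≤ η}

/-- The supporting hyperplane `H(p, Θ_I)`, described relative to a support point `θ*`. -/
def hyper (S : PISetup d J J1) (θs : EuclideanSpace ℝ (Fin d)) :
    Set (EuclideanSpace ℝ (Fin d)) :=
  {θ ∈ S.Θ | ⟪S.p, θ⟫ = ⟪S.p, θs⟫}

/-- The tangent cone `T(θ*)` to `Θ_I` at `θ*`. -/
def tangentConeAt (S : PISetup d J J1) (θs : EuclideanSpace ℝ (Fin d)) :
    Set (EuclideanSpace ℝ (Fin d)) :=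
  insert 0 {t | ∃ u : ℕ → EuclideanSpace ℝ (Fin d),
    (∀ n, u n ∈ S.idSet ∧ u n ≠ θs) ∧ Tendsto u atTop (𝓝 θs) ∧
    Tendsto (fun n => ‖u n - θs‖⁻¹ • (u n - θs)) atTop (𝓝 (‖t‖⁻¹ • t))}

/-- The linearized cone `L(θ*)`. -/
def linConeAt (S : PISetup d J J1) (θs : EuclideanSpace ℝ (Fin d)) :
    Set (EuclideanSpace ℝ (Fin d)) :=
  {t | (∀ j : Fin J, (j : ℕ) < J1 → S.g j θs = 0 → ⟪S.D j θs, t⟫ ≤ 0) ∧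
       (∀ j : Fin J, J1 ≤ (j : ℕ) → ⟪S.D j θs, t⟫ = 0)}

/-- The active set `J*(θ)` of (equality or inequality) constraints. -/
def activeAt (S : PISetup d J J1) (θ : EuclideanSpace ℝ (Fin d)) : Set (Fin J) :=
  {j | ((j : ℕ) < J1 ∧ S.g j θ = 0) ∨ J1 ≤ (j : ℕ)}

end PISetup

section ConeCompactness

variable {E : Type*} [NormedAddCommGroup E] [NormedSpace ℝ E]

theorem IsCompact.exists_pos_forall_exists_le {X ι : Type*} [TopologicalSpace X] [Finite ι]
    {K : Set X} (hK : IsCompact K) {f : ι → X → ℝ} (hf : ∀ k, Continuous (f k))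
    (hpos : ∀ x ∈ K, ∃ k, 0 < f k x) : ∃ ε > 0, ∀ x ∈ K, ∃ k, ε ≤ f k x := by
  cases nonempty_fintype ι
  rcases isEmpty_or_nonempty ι with hι | hι
  · exact ⟨1, one_pos, fun x hx => (hpos x hx).elim fun k _ => hι.elim k⟩
  let F : X → ℝ := fun x => Finset.univ.sup' Finset.univ_nonempty (f · x)
  have hFcont : Continuous F := Continuous.finset_sup'_apply _ fun k _ => hf k
  obtain ⟨ε, hε, hεF⟩ := hK.exists_forall_le' hFcont.continuousOn fun x hx => by
    obtain ⟨k, hk⟩ := hpos x hx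
    exact hk.trans_le (Finset.le_sup' (f · x) (Finset.mem_univ k))
  refine ⟨ε, hε, fun x hx => ?_⟩
  obtain ⟨k, -, hk⟩ := Finset.exists_mem_eq_sup' Finset.univ_nonempty (f · x)
  exact ⟨k, (hεF x hx).trans_eq hk⟩

theorem le_neg_mul_norm_of_forall_norm_eq_one {ℓ : E → ℝ}
    (hℓ : ∀ r : ℝ, 0 ≤ r → ∀ t, ℓ (r • t) = r * ℓ t) {L : Set E}
    (hL : ∀ r : ℝ, 0 ≤ r → ∀ t ∈ L, r • t ∈ L) {c : ℝ} (hc : ∀ t ∈ L, ‖t‖ = 1 → ℓ t ≤ -c)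
    {t : E} (ht : t ∈ L) : ℓ t ≤ -c * ‖t‖ := by
  rcases eq_or_ne t 0 with rfl | ht0
  · have hℓ0 : ℓ 0 = 0 := by simpa using hℓ 0 le_rfl 0
    simp [hℓ0]
  have hnorm : 0 < ‖t‖ := norm_pos_iff.mpr ht0
  have hunit : ‖‖t‖⁻¹ • t‖ = 1 := norm_smul_inv_norm ht0
  calc ℓ t = ‖t‖ * ℓ (‖t‖⁻¹ • t) := by
        rw [hℓ _ (inv_nonneg.mpr hnorm.le), ← mul_assoc, mul_inv_cancel₀ hnorm.ne', one_mul]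
    _ ≤ ‖t‖ * -c := by gcongr; exact hc _ (hL _ (inv_nonneg.mpr hnorm.le) t ht) hunit
    _ = -c * ‖t‖ := mul_comm _ _

theorem exists_le_neg_mul_norm_iff_exists_uniform_violation [ProperSpace E] {ι : Type*}
    [Finite ι] {f : ι → E → ℝ} {ℓ : E → ℝ} (hf : ∀ k, Continuous (f k))
    (hf_smul : ∀ k, ∀ r : ℝ, 0 ≤ r → ∀ t, f k (r • t) = r * f k t) (hℓ : Continuous ℓ)
    (hℓ_smul : ∀ r : ℝ, 0 ≤ r → ∀ t, ℓ (r • t) = r * ℓ t) :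
    (∃ c > (0 : ℝ), ∀ t, (∀ k, f k t ≤ 0) → ℓ t ≤ -c * ‖t‖) ↔
      (∃ ε > (0 : ℝ), ∀ t : E, ‖t‖ = 1 → 0 ≤ ℓ t → ∃ k, ε ≤ f k t) := by
  constructor
  · rintro ⟨c, hc, hcone⟩
    have hK : IsCompact (sphere (0 : E) 1 ∩ {t | 0 ≤ ℓ t}) :=
      (isCompact_sphere 0 1).inter_right (isClosed_le continuous_const hℓ)
    obtain ⟨ε, hε, hviol⟩ := hK.exists_pos_forall_exists_le hf fun t ⟨ht1, hℓt⟩ => by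
      by_contra! hfeas
      have := hcone t hfeas
      rw [mem_sphere_zero_iff_norm.mp ht1] at this
      linarith [hℓt.out]
    exact ⟨ε, hε, fun t ht1 hℓt => hviol t ⟨mem_sphere_zero_iff_norm.mpr ht1, hℓt⟩⟩
  · rintro ⟨ε, hε, hviol⟩
    let L : Set E := {t | ∀ k, f k t ≤ 0}
    have hL : IsClosed L := by
      simp only [L, Set.ofPred_forall]
      exact isClosed_iInter fun k => isClosed_le (hf k) continuous_const
    have hL_smul : ∀ r : ℝ, 0 ≤ r → ∀ t ∈ L, r • t ∈ L := fun r hr t ht k => by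
      rw [hf_smul k r hr]
      exact mul_nonpos_of_nonneg_of_nonpos hr (ht k)
    obtain ⟨c, hc, hcℓ⟩ := ((isCompact_sphere (0 : E) 1).inter_right hL).exists_forall_le'
      hℓ.neg.continuousOn (a := 0) fun t ⟨ht1, htL⟩ => by
        by_contra! hℓt
        obtain ⟨k, hk⟩ := hviol t (mem_sphere_zero_iff_norm.mp ht1) (neg_nonpos.mp hℓt)
        linarith [htL k]
    refine ⟨c, hc, fun t ht => le_neg_mul_norm_of_forall_norm_eq_one hℓ_smul hL_smul
      (fun t htL ht1 => ?_) ht⟩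
    exact le_neg_of_le_neg (hcℓ t ⟨mem_sphere_zero_iff_norm.mpr ht1, htL⟩)

end ConeCompactness

namespace PISetup

variable {d J J1 : ℕ} (S : PISetup d J J1) (θs : EuclideanSpace ℝ (Fin d))

def linViolation (j : S.activeAt θs) (t : EuclideanSpace ℝ (Fin d)) : ℝ :=
  if (j : ℕ) < J1 then ⟪S.D j θs, t⟫ else |⟪S.D j θs, t⟫|

theorem continuous_linViolation (j : S.activeAt θs) : Continuous (S.linViolation θs j) := by
  have hinner : Continuous fun t => ⟪S.D j θs, t⟫ := continuous_const.inner continuous_id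
  unfold linViolation
  split_ifs
  exacts [hinner, hinner.abs]

theorem linViolation_smul (j : S.activeAt θs) {r : ℝ} (hr : 0 ≤ r) (t : EuclideanSpace ℝ (Fin d)) :
    S.linViolation θs j (r • t) = r * S.linViolation θs j t := by
  unfold linViolation
  split_ifs <;> simp only [real_inner_smul_right, abs_mul, abs_of_nonneg hr]

theorem mem_linConeAt_iff (t : EuclideanSpace ℝ (Fin d)) :
    t ∈ S.linConeAt θs ↔ ∀ j : S.activeAt θs, S.linViolation θs j t ≤ 0 := by
  constructor
  · rintro ⟨hineq, heq⟩ ⟨j, hj⟩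
    unfold linViolation
    split_ifs with hlt
    · exact hineq j hlt (hj.resolve_right (not_le.mpr hlt)).2
    · exact (abs_eq_zero.mpr (heq j (not_lt.mp hlt))).le
  · intro h
    refine ⟨fun j hlt hg => ?_, fun j hle => ?_⟩
    · simpa [linViolation, hlt] using h ⟨j, Or.inl ⟨hlt, hg⟩⟩
    · simpa [linViolation, not_lt.mpr hle] using h ⟨j, Or.inr hle⟩

theorem exists_le_linViolation_iff (ε : ℝ) (t : EuclideanSpace ℝ (Fin d)) :
    (∃ j : Fin J, ((j : ℕ) < J1 ∧ S.g j θs = 0 ∧ ε ≤ ⟪S.D j θs, t⟫) ∨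
      (J1 ≤ (j : ℕ) ∧ ε ≤ |⟪S.D j θs, t⟫|)) ↔
    ∃ j : S.activeAt θs, ε ≤ S.linViolation θs j t := by
  constructor
  · rintro ⟨j, ⟨hlt, hg, hε⟩ | ⟨hle, hε⟩⟩
    · exact ⟨⟨j, Or.inl ⟨hlt, hg⟩⟩, by simpa [linViolation, hlt] using hε⟩
    · exact ⟨⟨j, Or.inr hle⟩, by simpa [linViolation, not_lt.mpr hle] using hε⟩
  · rintro ⟨⟨j, hj⟩, hε⟩
    unfold linViolation at hε
    split_ifs at hε with hlt
    · exact ⟨j, Or.inl ⟨hlt, (hj.resolve_right (not_le.mpr hlt)).2, hε⟩⟩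
    · exact ⟨j, Or.inr ⟨not_lt.mp hlt, hε⟩⟩

end PISetup

theorem assumption7'_iff_positive_inf_general {d J J1 : ℕ} (S : PISetup d J J1)
    (θs : EuclideanSpace ℝ (Fin d)) :
    (∃ c > (0:ℝ), ∀ t ∈ S.linConeAt θs, ⟪S.p, t⟫ ≤ -c * ‖t‖) ↔
    (∃ ε > (0:ℝ), ∀ t : EuclideanSpace ℝ (Fin d), ‖t‖ = 1 → 0 ≤ ⟪S.p, t⟫ →
        ∃ j : Fin J, ((j : ℕ) < J1 ∧ S.g j θs = 0 ∧ ε ≤ ⟪S.D j θs, t⟫) ∨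
          (J1 ≤ (j : ℕ) ∧ ε ≤ |⟪S.D j θs, t⟫|)) := by
  simp only [S.mem_linConeAt_iff, S.exists_le_linViolation_iff]
  exact exists_le_neg_mul_norm_iff_exists_uniform_violation (S.continuous_linViolation θs)
    (fun j r hr t => S.linViolation_smul θs j hr t) (continuous_const.inner continuous_id)
    (fun r _ t => real_inner_smul_right _ _ _)

/-- Display (7) of the paper: at any support point, Assumption 7′ is equivalent to the
infimum over unit vectors `t` with `p·t ≥ 0` of
`max{max_{j ∈ J1*(θ*)} D_j(θ*)·t, max_{J1<j≤J} |D_j(θ*)·t|}` being strictly positive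
(the positivity of the infimum is rendered as: there is `ε > 0` below all the maxima,
i.e. each feasible `t` has an active inequality constraint with `D_j(θ*)·t ≥ ε` or an
equality constraint with `|D_j(θ*)·t| ≥ ε`). -/
theorem assumption7'_iff_positive_inf {d J J1 : ℕ} (S : PISetup d J J1)
    (hIne : S.idSet.Nonempty) (hIint : S.idSet ⊆ interior S.Θ)
    (θs : EuclideanSpace ℝ (Fin d)) (hθs : θs ∈ S.suppSet) :
    (∃ c > (0:ℝ), ∀ t ∈ S.linConeAt θs, ⟪S.p, t⟫ ≤ -c * ‖t‖) ↔
    (∃ ε > (0:ℝ), ∀ t : EuclideanSpace ℝ (Fin d), ‖t‖ = 1 → 0 ≤ ⟪S.p, t⟫ →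
        ∃ j : Fin J, ((j : ℕ) < J1 ∧ S.g j θs = 0 ∧ ε ≤ ⟪S.D j θs, t⟫) ∨
          (J1 ≤ (j : ℕ) ∧ ε ≤ |⟪S.D j θs, t⟫|)) :=
  assumption7'_iff_positive_inf_general S θs
end
end

section
/- Under the Setup, suppose Assumption 3' holds: for each support point θ* ∈ S(p,Θ_I) there exist constants η > 0 and C > 0 such that Q(θ) ≥ C·d(θ,Θ_I) for all θ ∈ B(θ*,η). Then for every support point θ* ∈ S(p,Θ_I), the linearized cone is contained in the tangent cone, L(θ*) ⊆ T(θ*); combined with the standard inclusion T(θ*) ⊆ L(θ*) (valid under continuous differentiability), this yields the Abadie constraint qualification L(θ*) = T(θ*) at every support point. -/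
open Filter Topology Metric RealInnerProductSpace

noncomputable section

/-! The inclusion `T(θ*) ⊆ L(θ*)` is a first-order expansion of the constraints along a sequence
of points of `Θ_I` approaching `θ*` from the direction `t`. For `L(θ*) ⊆ T(θ*)`, move from `θ*`
along `t ∈ L(θ*)`: to first order no constraint is violated, so `Q(θ* + τ t) = o(τ)` as `τ ↓ 0`,
and the error bound of Assumption 3' gives a point `u(τ) ∈ Θ_I` with
`‖θ* + τ t - u(τ)‖ = o(τ)`. Hence `(u(τ) - θ*) / τ → t`, so `t` is a tangent direction. -/

section

variable {E : Type*} [NormedAddCommGroup E] [NormedSpace ℝ E] {u : ℝ → E} {x t : E}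

lemma norm_inv_smul_smul_of_pos {c : ℝ} (hc : 0 < c) (v : E) :
    ‖c • v‖⁻¹ • (c • v) = ‖v‖⁻¹ • v := by
  rw [norm_smul, Real.norm_of_nonneg hc.le, smul_smul, mul_inv, mul_right_comm,
    inv_mul_cancel₀ hc.ne', one_mul]

lemma tendsto_of_tendsto_inv_smul_sub
    (h : Tendsto (fun τ => τ⁻¹ • (u τ - x)) (𝓝[>] 0) (𝓝 t)) : Tendsto u (𝓝[>] 0) (𝓝 x) := by
  have hlim : Tendsto (fun τ : ℝ => x + τ • (τ⁻¹ • (u τ - x))) (𝓝[>] 0)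
      (𝓝 (x + (0 : ℝ) • t)) :=
    tendsto_const_nhds.add ((tendsto_nhdsWithin_of_tendsto_nhds tendsto_id).smul h)
  rw [zero_smul, add_zero] at hlim
  refine hlim.congr' ?_
  filter_upwards [self_mem_nhdsWithin] with τ (hτ : 0 < τ)
  rw [smul_inv_smul₀ hτ.ne', add_sub_cancel]

lemma eventually_ne_of_tendsto_inv_smul_sub (ht : t ≠ 0)
    (h : Tendsto (fun τ => τ⁻¹ • (u τ - x)) (𝓝[>] 0) (𝓝 t)) : ∀ᶠ τ in 𝓝[>] 0, u τ ≠ x := by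
  filter_upwards [h.eventually_ne ht] with τ hτ hux
  simp [hux] at hτ

lemma tendsto_normalize_of_tendsto_inv_smul_sub (ht : t ≠ 0)
    (h : Tendsto (fun τ => τ⁻¹ • (u τ - x)) (𝓝[>] 0) (𝓝 t)) :
    Tendsto (fun τ => ‖u τ - x‖⁻¹ • (u τ - x)) (𝓝[>] 0) (𝓝 (‖t‖⁻¹ • t)) := by
  have hcont : ContinuousAt (fun v : E => ‖v‖⁻¹ • v) t :=
    (continuousAt_id.norm.inv₀ (norm_ne_zero_iff.2 ht)).smul continuousAt_id
  refine (hcont.tendsto.comp h).congr' ?_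
  filter_upwards [self_mem_nhdsWithin] with τ (hτ : 0 < τ)
  exact norm_inv_smul_smul_of_pos (inv_pos.2 hτ) _

lemma exists_tendsto_inv_smul_sub_of_infDist_le [ProperSpace E] {K : Set E} (hK : IsClosed K)
    (hx : x ∈ K) (h : ∀ ε > 0, ∀ᶠ τ in 𝓝[>] (0 : ℝ), infDist (x + τ • t) K ≤ ε * τ) :
    ∃ u : ℝ → E, (∀ τ, u τ ∈ K) ∧ Tendsto (fun τ => τ⁻¹ • (u τ - x)) (𝓝[>] 0) (𝓝 t) := by
  choose u huK hu using fun τ : ℝ => hK.exists_infDist_eq_dist ⟨x, hx⟩ (x + τ • t)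
  refine ⟨u, huK, Metric.tendsto_nhds.2 fun ε hε => ?_⟩
  filter_upwards [h (ε / 2) (half_pos hε), self_mem_nhdsWithin] with τ hτ (hτ0 : 0 < τ)
  have hsub : τ⁻¹ • (u τ - x) - t = τ⁻¹ • (u τ - (x + τ • t)) := by
    rw [smul_sub, smul_sub, smul_add, inv_smul_smul₀ hτ0.ne']
    abel
  calc dist (τ⁻¹ • (u τ - x)) t = τ⁻¹ * dist (x + τ • t) (u τ) := by
        rw [dist_eq_norm, hsub, norm_smul, Real.norm_of_nonneg (inv_nonneg.2 hτ0.le),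
          dist_comm, dist_eq_norm]
    _ ≤ τ⁻¹ * (ε / 2 * τ) := by rw [← hu τ]; gcongr
    _ < ε := by field_simp; linarith

end

lemma eventually_le_mul_of_tendsto_inv_mul {φ : ℝ → ℝ} {L ε : ℝ}
    (hφ : Tendsto (fun τ => τ⁻¹ * φ τ) (𝓝[>] 0) (𝓝 L)) (hL : L < ε) :
    ∀ᶠ τ in 𝓝[>] 0, φ τ ≤ ε * τ := by
  filter_upwards [hφ.eventually_lt_const hL, self_mem_nhdsWithin] with τ h (hτ : 0 < τ)
  rw [inv_mul_lt_iff₀ hτ] at h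
  linarith

section

variable {F : Type*} [NormedAddCommGroup F] [InnerProductSpace ℝ F] [CompleteSpace F]
  {f : F → ℝ} {f' x : F}

lemma HasGradientAt.tendsto_slope_line (hf : HasGradientAt f f' x) (v : F) :
    Tendsto (fun τ : ℝ => τ⁻¹ * (f (x + τ • v) - f x)) (𝓝[>] 0) (𝓝 ⟪f', v⟫) := by
  simpa [InnerProductSpace.toDual_apply_apply] using
    (hf.hasFDerivAt.hasLineDerivAt v).tendsto_slope_zero_right

lemma HasGradientAt.tendsto_normalized_slope (hf : HasGradientAt f f' x) {α : Type*}
    {l : Filter α} {u : α → F} {w : F} (hu : Tendsto u l (𝓝 x))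
    (hw : Tendsto (fun n => ‖u n - x‖⁻¹ • (u n - x)) l (𝓝 w)) :
    Tendsto (fun n => ‖u n - x‖⁻¹ * (f (u n) - f x)) l (𝓝 ⟪f', w⟫) := by
  have hrem : Tendsto (fun n => (f (u n) - f x - ⟪f', u n - x⟫) / ‖u n - x‖) l (𝓝 0) :=
    ((hasGradientAt_iff_isLittleO.1 hf).comp_tendsto hu).norm_right.tendsto_div_nhds_zero
  have hlim := hrem.add ((tendsto_const_nhds (x := f')).inner hw)
  rw [zero_add] at hlim
  refine hlim.congr fun n => ?_
  rw [real_inner_smul_right]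
  ring

end

namespace PISetup

variable {d J J1 : ℕ} (S : PISetup d J J1) {θs t : EuclideanSpace ℝ (Fin d)}

/-- The `j`-th term of the criterion: `S.crit θ = max 0 (⨆ j, S.violation j θ)` by definition. -/
def violation (j : Fin J) (θ : EuclideanSpace ℝ (Fin d)) : ℝ :=
  if (j : ℕ) < J1 then S.g j θ else |S.g j θ|

lemma continuous_g (j : Fin J) : Continuous (S.g j) :=
  continuous_iff_continuousAt.2 fun θ => (S.hgrad j θ).hasFDerivAt.continuousAt

lemma continuous_violation (j : Fin J) : Continuous (S.violation j) := by
  unfold violation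
  by_cases hj : (j : ℕ) < J1 <;> simp [hj, S.continuous_g j, (S.continuous_g j).abs]

lemma mem_idSet_iff {θ : EuclideanSpace ℝ (Fin d)} :
    θ ∈ S.idSet ↔ θ ∈ S.Θ ∧ ∀ j, S.violation j θ ≤ 0 := by
  refine and_congr_right fun _ => forall_congr' fun j => ?_
  by_cases hj : (j : ℕ) < J1
  · simp [violation, hj, hj.not_ge]
  · simp [violation, hj, not_lt.1 hj]

lemma isClosed_idSet : IsClosed S.idSet := by
  have hid : S.idSet = S.Θ ∩ ⋂ j, {θ | S.violation j θ ≤ 0} := by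
    ext θ
    simp [mem_idSet_iff]
  rw [hid]
  exact S.compactΘ.isClosed.inter
    (isClosed_iInter fun j => isClosed_le (S.continuous_violation j) continuous_const)

lemma crit_le {θ : EuclideanSpace ℝ (Fin d)} {c : ℝ} (hc : 0 ≤ c)
    (h : ∀ j, S.violation j θ ≤ c) : S.crit θ ≤ c :=
  max_le hc (Real.iSup_le h hc)

lemma ball_mem_nhds (hint : θs ∈ interior S.Θ) {η : ℝ} (hη : 0 < η) : S.ball θs η ∈ 𝓝 θs :=
  mem_of_superset (inter_mem (mem_interior_iff_mem_nhds.1 hint) (closedBall_mem_nhds θs hη))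
    fun θ ⟨hΘ, hb⟩ => ⟨hΘ, by rwa [mem_closedBall, dist_eq_norm] at hb⟩

lemma eventually_violation_le_mul (hθs : θs ∈ S.idSet) (ht : t ∈ S.linConeAt θs) (j : Fin J)
    {ε : ℝ} (hε : 0 < ε) : ∀ᶠ τ in 𝓝[>] 0, S.violation j (θs + τ • t) ≤ ε * τ := by
  have hslope := (S.hgrad j θs).tendsto_slope_line t
  by_cases hj : (j : ℕ) < J1
  · simp only [violation, if_pos hj]
    rcases ((hθs.2 j).1 hj).lt_or_eq with hneg | hzero
    · have hline : Tendsto (fun τ : ℝ => S.g j (θs + τ • t)) (𝓝 0) (𝓝 (S.g j θs)) :=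
        (S.continuous_g j).continuousAt.tendsto.comp
          (Continuous.tendsto' (by fun_prop) 0 θs (by simp))
      filter_upwards [nhdsWithin_le_nhds (hline.eventually_lt_const hneg),
        self_mem_nhdsWithin] with τ hτ (hτ0 : 0 < τ)
      exact hτ.le.trans (by positivity)
    · simp only [hzero, sub_zero] at hslope
      exact eventually_le_mul_of_tendsto_inv_mul hslope ((ht.1 j hj hzero).trans_lt hε)
  · have hj' : J1 ≤ (j : ℕ) := not_lt.1 hj
    simp only [violation, if_neg hj]
    simp only [(hθs.2 j).2 hj', sub_zero, ht.2 j hj'] at hslope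
    have hneg : Tendsto (fun τ : ℝ => τ⁻¹ * -S.g j (θs + τ • t)) (𝓝[>] 0) (𝓝 0) := by
      simpa using hslope.neg
    filter_upwards [eventually_le_mul_of_tendsto_inv_mul hslope hε,
      eventually_le_mul_of_tendsto_inv_mul hneg hε] with τ hpos hneg
    exact abs_le.2 ⟨by linarith, hpos⟩

lemma eventually_infDist_le_mul (hθs : θs ∈ S.idSet) (hint : θs ∈ interior S.Θ) {η C : ℝ}
    (hη : 0 < η) (hC : 0 < C) (hcrit : ∀ θ ∈ S.ball θs η, S.crit θ ≥ C * infDist θ S.idSet)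
    (ht : t ∈ S.linConeAt θs) :
    ∀ ε > 0, ∀ᶠ τ in 𝓝[>] (0 : ℝ), infDist (θs + τ • t) S.idSet ≤ ε * τ := by
  intro ε hε
  have hline : Tendsto (fun τ : ℝ => θs + τ • t) (𝓝[>] 0) (𝓝 θs) :=
    tendsto_nhdsWithin_of_tendsto_nhds (Continuous.tendsto' (by fun_prop) 0 θs (by simp))
  have hviol : ∀ᶠ τ in 𝓝[>] 0, ∀ j, S.violation j (θs + τ • t) ≤ C * ε * τ :=
    eventually_all.2 fun j => S.eventually_violation_le_mul hθs ht j (mul_pos hC hε)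
  filter_upwards [hline.eventually (S.ball_mem_nhds hint hη), hviol, self_mem_nhdsWithin]
    with τ hball hv (hτ : 0 < τ)
  have hle := (hcrit _ hball).le.trans (S.crit_le (by positivity) hv)
  rw [mul_assoc] at hle
  exact le_of_mul_le_mul_left hle hC

lemma mem_tangentConeAt_of_tendsto {u : ℝ → EuclideanSpace ℝ (Fin d)} (hu : ∀ τ, u τ ∈ S.idSet)
    (h : Tendsto (fun τ => τ⁻¹ • (u τ - θs)) (𝓝[>] 0) (𝓝 t)) : t ∈ S.tangentConeAt θs := by
  rcases eq_or_ne t 0 with rfl | ht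
  · exact Set.mem_insert _ _
  obtain ⟨s, hs⟩ := exists_seq_tendsto (𝓝[>] (0 : ℝ))
  obtain ⟨N, hN⟩ := eventually_atTop.1 (hs.eventually (eventually_ne_of_tendsto_inv_smul_sub ht h))
  have hsN : Tendsto (fun n => s (n + N)) atTop (𝓝[>] 0) := (tendsto_add_atTop_iff_nat N).2 hs
  exact Or.inr ⟨u ∘ fun n => s (n + N), fun n => ⟨hu _, hN _ (Nat.le_add_left N n)⟩,
    (tendsto_of_tendsto_inv_smul_sub h).comp hsN,
    (tendsto_normalize_of_tendsto_inv_smul_sub ht h).comp hsN⟩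

theorem linConeAt_subset_tangentConeAt (hθs : θs ∈ S.idSet) (hint : θs ∈ interior S.Θ)
    {η C : ℝ} (hη : 0 < η) (hC : 0 < C)
    (hcrit : ∀ θ ∈ S.ball θs η, S.crit θ ≥ C * infDist θ S.idSet) :
    S.linConeAt θs ⊆ S.tangentConeAt θs := fun _ ht =>
  have ⟨_, hu, hlim⟩ := exists_tendsto_inv_smul_sub_of_infDist_le S.isClosed_idSet hθs
    (S.eventually_infDist_le_mul hθs hint hη hC hcrit ht)
  S.mem_tangentConeAt_of_tendsto hu hlim

theorem tangentConeAt_subset_linConeAt (hθs : θs ∈ S.idSet) :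
    S.tangentConeAt θs ⊆ S.linConeAt θs := by
  intro t ht
  rcases eq_or_ne t 0 with rfl | ht0
  · simp [linConeAt]
  obtain ⟨u, hu, hlim, hdir⟩ := (Set.mem_insert_iff.1 ht).resolve_left ht0
  have hslope (j : Fin J) := (S.hgrad j θs).tendsto_normalized_slope hlim hdir
  have hinner (j : Fin J) : ⟪S.D j θs, t⟫ = ‖t‖ * ⟪S.D j θs, ‖t‖⁻¹ • t⟫ := by
    rw [real_inner_smul_right, mul_inv_cancel_left₀ (norm_ne_zero_iff.2 ht0)]
  refine ⟨fun j hj hj0 => ?_, fun j hj => ?_⟩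
  · rw [hinner]
    refine mul_nonpos_of_nonneg_of_nonpos (norm_nonneg _) (le_of_tendsto' (hslope j) fun n => ?_)
    rw [hj0, sub_zero]
    exact mul_nonpos_of_nonneg_of_nonpos (inv_nonneg.2 (norm_nonneg _)) (((hu n).1.2 j).1 hj)
  · have hzero : Tendsto (fun n => ‖u n - θs‖⁻¹ * (S.g j (u n) - S.g j θs)) atTop (𝓝 0) :=
      tendsto_const_nhds.congr fun n => by simp [((hu n).1.2 j).2 hj, (hθs.2 j).2 hj]
    rw [hinner, tendsto_nhds_unique (hslope j) hzero, mul_zero]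

end PISetup

theorem assumption3'_implies_ACQ_general {d J J1 : ℕ} (S : PISetup d J J1)
    (hIint : S.idSet ⊆ interior S.Θ)
    (h3' : ∀ θs ∈ S.suppSet, ∃ η > (0:ℝ), ∃ C > (0:ℝ),
      ∀ θ ∈ S.ball θs η, S.crit θ ≥ C * infDist θ S.idSet) :
    ∀ θs ∈ S.suppSet,
      S.linConeAt θs ⊆ S.tangentConeAt θs ∧ S.linConeAt θs = S.tangentConeAt θs := by
  intro θs hθs
  obtain ⟨η, hη, C, hC, hcrit⟩ := h3' θs hθs
  have hLT := S.linConeAt_subset_tangentConeAt hθs.1 (hIint hθs.1) hη hC hcrit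
  exact ⟨hLT, hLT.antisymm (S.tangentConeAt_subset_linConeAt hθs.1)⟩

/-- Theorem 1, claim 3: Assumption 3′ implies the Abadie constraint qualification at
every support point: the linearized cone is contained in the tangent cone and hence,
by the standard reverse inclusion valid under continuous differentiability, the two
cones coincide. -/
theorem assumption3'_implies_ACQ {d J J1 : ℕ} (S : PISetup d J J1)
    (hIne : S.idSet.Nonempty) (hIint : S.idSet ⊆ interior S.Θ)
    (h3' : ∀ θs ∈ S.suppSet, ∃ η > (0:ℝ), ∃ C > (0:ℝ),
      ∀ θ ∈ S.ball θs η, S.crit θ ≥ C * infDist θ S.idSet) :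
    ∀ θs ∈ S.suppSet,
      S.linConeAt θs ⊆ S.tangentConeAt θs ∧ S.linConeAt θs = S.tangentConeAt θs :=
  assumption3'_implies_ACQ_general S hIint h3'
end
end
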